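/- (Braided form of the fused boundary operator.) Let I ≥ 1 be an integer, 0 < q < 1, 𝔞, 𝔠 ∈ ℝ, and let u ∈ ℂ \ {0} be such that 𝔠·(u q^{(I+1)/2−a})² + u q^{(I+1)/2−a} − 𝔞 ≠ 0 for each 1 ≤ a ≤ I and u²·q^m ≠ 1 for every integer m with −I ≤ m ≤ I. Then K̊^I(u) = ∏_{a = I,…,1} [ K(u q^{(I+1)/2−a})₁ ∘ ∏_{b = a−1,…,1} Ř(u² q^{I+1−a−b})_{a−b} ], where both products are taken left to right in decreasing order of the index, K(v)₁ denotes K(v) acting on the first tensor factor of (ℂ²)^{⊗I}, and Ř(v)_m acts on the m-th and (m+1)-th tensor factors. -/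

import Mathlib

open scoped Matrix ComplexOrder

noncomputable section

/-- Entries `R(u)_{a,b}^{c,d}` of the unfused stochastic six-vertex `R`-matrix. -/
def Rent (q u : ℂ) (a b c d : Fin 2) : ℂ :=
  if a = 0 ∧ b = 0 ∧ c = 0 ∧ d = 0 then 1
  else if a = 1 ∧ b = 1 ∧ c = 1 ∧ d = 1 then 1
  else if a = 0 ∧ b = 1 ∧ c = 0 ∧ d = 1 then q * (1 - u) / (1 - q * u)
  else if a = 0 ∧ b = 1 ∧ c = 1 ∧ d = 0 then (1 - q) / (1 - q * u)
  else if a = 1 ∧ b = 0 ∧ c = 0 ∧ d = 1 then u * (1 - q) / (1 - q * u)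
  else if a = 1 ∧ b = 0 ∧ c = 1 ∧ d = 0 then (1 - u) / (1 - q * u)
  else 0

/-- The unfused `R`-matrix as an operator (matrix) on `ℂ² ⊗ ℂ²`;
row index `(c,d)` (output), column index `(a,b)` (input), so that
`R(u)(e_a ⊗ e_b) = Σ_{c,d} R(u)_{a,b}^{c,d} e_c ⊗ e_d`. -/
def Rmat (q u : ℂ) : Matrix (Fin 2 × Fin 2) (Fin 2 × Fin 2) ℂ :=
  fun cd ab => Rent q u ab.1 ab.2 cd.1 cd.2

/-- Entries `K(u)_a^d` of the unfused boundary `K`-matrix, parameters `fa = 𝔞`, `fc = 𝔠`. -/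
def Kent (fa fc u : ℂ) (a d : Fin 2) : ℂ :=
  if a = 0 ∧ d = 0 then ((fc - fa) * u ^ 2 + u) / (fc * u ^ 2 + u - fa)
  else if a = 0 ∧ d = 1 then fa * (u ^ 2 - 1) / (fc * u ^ 2 + u - fa)
  else if a = 1 ∧ d = 0 then fc * (u ^ 2 - 1) / (fc * u ^ 2 + u - fa)
  else (fc - fa + u) / (fc * u ^ 2 + u - fa)

/-- The unfused `K`-matrix as an operator on `ℂ²`: row `d` (output), column `a` (input). -/
def Kmat (fa fc u : ℂ) : Matrix (Fin 2) (Fin 2) ℂ := fun d a => Kent fa fc u a d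

/-- Entries `K̄(u)_b^c` of the unfused boundary `K̄`-matrix, parameters `fb = 𝔟`, `fd = 𝔡`. -/
def Kbent (fb fd u : ℂ) (b c : Fin 2) : ℂ :=
  if b = 0 ∧ c = 0 then ((fb - fd) * u ^ 2 - u) / (fb * u ^ 2 - u - fd)
  else if b = 0 ∧ c = 1 then fd * (u ^ 2 - 1) / (fb * u ^ 2 - u - fd)
  else if b = 1 ∧ c = 0 then fb * (u ^ 2 - 1) / (fb * u ^ 2 - u - fd)
  else (fb - fd - u) / (fb * u ^ 2 - u - fd)

/-- The operator `P` on `ℂ² ⊗ ℂ²` swapping the two tensor factors. -/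
def swapMat : Matrix (Fin 2 × Fin 2) (Fin 2 × Fin 2) ℂ :=
  fun p r => if p.1 = r.2 ∧ p.2 = r.1 then 1 else 0

/-- `Ř(u) = P ∘ R(u)`. -/
def RcheckMat (q u : ℂ) : Matrix (Fin 2 × Fin 2) (Fin 2 × Fin 2) ℂ := swapMat * Rmat q u

/-- A two-site operator `T` placed at sites `i, j` of an `n`-fold tensor power of `ℂ²`,
acting as the identity on the other factors.  Here `(ℂ²)^{⊗n}` is identified with the
function space `(Fin n → Fin 2) → ℂ` with its standard basis. -/
def emb2 {n : ℕ} (i j : Fin n) (T : Matrix (Fin 2 × Fin 2) (Fin 2 × Fin 2) ℂ) :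
    Matrix (Fin n → Fin 2) (Fin n → Fin 2) ℂ :=
  fun x y => T (x i, x j) (y i, y j) * (if ∀ k, k ≠ i → k ≠ j → x k = y k then 1 else 0)

/-- A one-site operator `T` placed at site `i` of an `n`-fold tensor power of `ℂ²`. -/
def emb1 {n : ℕ} (i : Fin n) (T : Matrix (Fin 2) (Fin 2) ℂ) :
    Matrix (Fin n → Fin 2) (Fin n → Fin 2) ℂ :=
  fun x y => T (x i) (y i) * (if ∀ k, k ≠ i → x k = y k then 1 else 0)

/-- The permutation operator `P_ω` on `(ℂ²)^{⊗n}`: it puts the `k`-th factor in position `ω(k)`. -/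
def permMat (n : ℕ) (ω : Equiv.Perm (Fin n)) :
    Matrix (Fin n → Fin 2) (Fin n → Fin 2) ℂ :=
  fun x y => if (fun k => x (ω k)) = y then 1 else 0

/-- `inv(a)` : the number of inversions of a `{0,1}`-word. -/
def invCount {I : ℕ} (x : Fin I → Fin 2) : ℕ :=
  (Finset.univ.filter (fun p : Fin I × Fin I => p.1 < p.2 ∧ x p.2 < x p.1)).card

/-- `Z_q(I;m)`. -/
def Zq (I : ℕ) (q : ℂ) (m : ℕ) : ℂ :=
  ∑ x ∈ Finset.univ.filter (fun x : Fin I → Fin 2 => (∑ j, ((x j : ℕ))) = m),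
    q ^ invCount x

/-- The projection `Π : (ℂ²)^{⊗I} → ℂ^{I+1}`, `e_{a₁…a_I} ↦ e_{Σ a_j}`. -/
def PiMat (I : ℕ) : Matrix (Fin (I + 1)) (Fin I → Fin 2) ℂ :=
  fun m x => if (∑ j, ((x j : ℕ))) = (m : ℕ) then 1 else 0

/-- The injection `Π̂ : ℂ^{I+1} → (ℂ²)^{⊗I}`. -/
def hatPiMat (I : ℕ) (q : ℂ) : Matrix (Fin I → Fin 2) (Fin (I + 1)) ℂ :=
  fun x m => if (∑ j, ((x j : ℕ))) = (m : ℕ) then q ^ invCount x / Zq I q (m : ℕ) else 0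

/-- `F = Π̂ ∘ Π`, the projector onto the `q`-exchangeable subspace. -/
def Fmat (I : ℕ) (q : ℂ) : Matrix (Fin I → Fin 2) (Fin I → Fin 2) ℂ :=
  hatPiMat I q * PiMat I

/-- Restriction of a configuration on `2I` sites to the first `I` sites. -/
def firstHalf {I : ℕ} (x : Fin (2 * I) → Fin 2) : Fin I → Fin 2 :=
  fun k => x ⟨k.1, by have := k.isLt; omega⟩

/-- Restriction of a configuration on `2I` sites to the last `I` sites. -/
def secondHalf {I : ℕ} (x : Fin (2 * I) → Fin 2) : Fin I → Fin 2 :=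
  fun k => x ⟨k.1 + I, by have := k.isLt; omega⟩

/-- `F ⊗ F` acting on `(ℂ²)^{⊗2I}`. -/
def FFmat (I : ℕ) (q : ℂ) : Matrix (Fin (2 * I) → Fin 2) (Fin (2 * I) → Fin 2) ℂ :=
  fun x y => Fmat I q (firstHalf x) (firstHalf y) * Fmat I q (secondHalf x) (secondHalf y)

/-- `Π ⊗ Π : (ℂ²)^{⊗2I} → ℂ^{I+1} ⊗ ℂ^{I+1}`. -/
def PiPiMat (I : ℕ) : Matrix (Fin (I + 1) × Fin (I + 1)) (Fin (2 * I) → Fin 2) ℂ :=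
  fun p x => PiMat I p.1 (firstHalf x) * PiMat I p.2 (secondHalf x)

/-- `Π̂ ⊗ Π̂ : ℂ^{I+1} ⊗ ℂ^{I+1} → (ℂ²)^{⊗2I}`. -/
def hatPiPiMat (I : ℕ) (q : ℂ) : Matrix (Fin (2 * I) → Fin 2) (Fin (I + 1) × Fin (I + 1)) ℂ :=
  fun x p => hatPiMat I q (firstHalf x) p.1 * hatPiMat I q (secondHalf x) p.2

/-- The fused bulk operator `R̊^I(u)` on `(ℂ²)^{⊗2I}` : the ordered product (composition,
factors written from left to right) over `a = I, I-1, …, 1` and, inside, `b = 1, 2, …, I`,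
of the operators `R(u q^{b-a})_{b, a+I}` (sites are 1-based; here `a = I - a'`, `b = b' + 1`). -/
def Rring (I : ℕ) (q u : ℂ) : Matrix (Fin (2 * I) → Fin 2) (Fin (2 * I) → Fin 2) ℂ :=
  ((List.finRange I).map (fun a' =>
    ((List.finRange I).map (fun b' =>
      emb2 (⟨b'.1, by have := b'.isLt; omega⟩ : Fin (2 * I))
        ⟨2 * I - 1 - a'.1, by have := a'.isLt; omega⟩
        (Rmat q (u * q ^ (((b'.1 : ℤ) + 1) - ((I : ℤ) - (a'.1 : ℤ))))))).prod)).prod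

/-- The fused `R`-matrix `R^I(u) = (Π⊗Π) ∘ R̊^I(u) ∘ (Π̂⊗Π̂)` on `ℂ^{I+1} ⊗ ℂ^{I+1}`;
its entry at row `(c,d)`, column `(a,b)` is `R^I(u)_{a,b}^{c,d}`. -/
def RI (I : ℕ) (q u : ℂ) :
    Matrix (Fin (I + 1) × Fin (I + 1)) (Fin (I + 1) × Fin (I + 1)) ℂ :=
  PiPiMat I * Rring I q u * hatPiPiMat I q

/-- Real powers of a positive real number, viewed in `ℂ`. -/
def qrpow (q : ℝ) (r : ℝ) : ℂ := ((q ^ r : ℝ) : ℂ)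

/-- The fused boundary operator `K̊^I(u)` on `(ℂ²)^{⊗I}` : `P_rev` composed with the ordered
product over `a = I, …, 1` of `K(u q^{(I+1)/2-a})_a` composed with the ordered product over
`b = a-1, …, 1` of `R(u² q^{I+1-a-b})_{b,a}` (sites 1-based; `a = I - a'`, `b = a - 1 - b'`). -/
def Kring (I : ℕ) (q : ℝ) (fa fc : ℂ) (u : ℂ) :
    Matrix (Fin I → Fin 2) (Fin I → Fin 2) ℂ :=
  permMat I (Fin.revPerm) *
  ((List.finRange I).map (fun a' =>
    emb1 (⟨I - 1 - a'.1, by have := a'.isLt; omega⟩ : Fin I)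
        (Kmat fa fc (u * qrpow q (((I : ℝ) + 1) / 2 - ((I : ℝ) - (a'.1 : ℝ))))) *
    ((List.finRange (I - 1 - a'.1)).map (fun b' =>
      emb2 (⟨I - a'.1 - 2 - b'.1, by have := a'.isLt; have := b'.isLt; omega⟩ : Fin I)
        ⟨I - 1 - a'.1, by have := a'.isLt; omega⟩
        (Rmat (q : ℂ)
          (u ^ 2 * (q : ℂ) ^ (((I : ℤ) + 1) - ((I : ℤ) - (a'.1 : ℤ)) -
            ((I : ℤ) - (a'.1 : ℤ) - 1 - (b'.1 : ℤ))))))).prod)).prod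

/-- The fused `K`-matrix `K^I(u) = Π ∘ K̊^I(u) ∘ Π̂` on `ℂ^{I+1}`;
its entry at row `d`, column `a` is `K^I(u)_a^d`. -/
def KI (I : ℕ) (q : ℝ) (fa fc u : ℂ) : Matrix (Fin (I + 1)) (Fin (I + 1)) ℂ :=
  PiMat I * Kring I q fa fc u * hatPiMat I (q : ℂ)

/-- `M₀(u) = u·1 + 𝐞`, `M₁(u) = u⁻¹·1 + 𝐝` in a ℂ-algebra `A`. -/
def Mop {A : Type*} [Ring A] [Algebra ℂ A] (dd ee : A) (i : Fin 2) (u : ℂ) : A :=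
  if i = 0 then algebraMap ℂ A u + ee else algebraMap ℂ A u⁻¹ + dd

/-- The fused elements `M^I_ζ(u)`. -/
def MIop {A : Type*} [Ring A] [Algebra ℂ A] (dd ee : A) (I : ℕ) (q : ℝ) (ζ : ℕ) (u : ℂ) : A :=
  ∑ z ∈ Finset.univ.filter (fun z : Fin I → Fin 2 => (∑ j, ((z j : ℕ))) = ζ),
    ((List.finRange I).map (fun a =>
      Mop dd ee (z a) (u * qrpow q (((a.1 : ℝ) + 1) - ((I : ℝ) + 1) / 2)))).prod

end

/-! Permutation operators conjugate local operators to the permuted sites: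
`P_ω ∘ T_{i,j} = T_{ω i, ω j} ∘ P_ω`. Let `ρ_m` reverse the sites `0, …, m-1` and let
`σ_m = (0 1 … m)`, so that `ρ_{m+1} = σ_m ρ_m` and `σ_m = s_0 ⋯ s_{m-1}` for the adjacent
transpositions `s_b = (b b+1)`. Then `P_{ρ_m}` turns `K_m ∏_b R_{m-1-b,m}` into `K_m ∏_b R_{b,m}`,
`P_{σ_m}` moves `K_m` to `K_0`, and `P_{σ_m} ∏_b R_{b,m} = ∏_b P_{s_b} R_{b,b+1} = ∏_b Ř_{b,b+1}`.
Since `P_rev = P_{ρ_I}`, an induction on `m` pushes `P_rev` through all the factors of `K̊^I(u)`. -/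

lemma SemiconjBy.list_prod_map {M ι : Type*} [Monoid M] {a : M} {f g : ι → M} {l : List ι}
    (h : ∀ i ∈ l, SemiconjBy a (f i) (g i)) : SemiconjBy a (l.map f).prod (l.map g).prod := by
  induction l with
  | nil => exact SemiconjBy.one_right a
  | cons i l ih =>
    simp only [List.map_cons, List.prod_cons]
    exact (h i List.mem_cons_self).mul_right (ih fun j hj => h j (List.mem_cons_of_mem i hj))

lemma List.map_finRange_eq_map_range {α : Type*} {n : ℕ} {F : Fin n → α} {G : ℕ → α}
    (h : ∀ a : Fin n, F a = G a) : (List.finRange n).map F = (List.range n).map G := by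
  rw [← List.map_coe_finRange_eq_range, List.map_map]
  exact List.map_congr_left fun a _ => h a

lemma List.map_finRange_eq_map_reverse_range {α : Type*} {n : ℕ} {F : Fin n → α} {G : ℕ → α}
    (h : ∀ a : Fin n, F a = G (n - 1 - a)) :
    (List.finRange n).map F = (List.range n).reverse.map G := by
  rw [List.range_eq_range', List.reverse_range', List.map_map]
  exact List.map_finRange_eq_map_range fun a => by simp [h]

section PermMat

variable {N : ℕ}

lemma permMat_mul_apply (ω : Equiv.Perm (Fin N)) (M : Matrix (Fin N → Fin 2) (Fin N → Fin 2) ℂ)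
    (x y : Fin N → Fin 2) : (permMat N ω * M) x y = M (fun k => x (ω k)) y := by
  simp [Matrix.mul_apply, permMat]

lemma mul_permMat_apply (ω : Equiv.Perm (Fin N)) (M : Matrix (Fin N → Fin 2) (Fin N → Fin 2) ℂ)
    (x y : Fin N → Fin 2) : (M * permMat N ω) x y = M x (fun k => y (ω⁻¹ k)) := by
  have hz : ∀ z : Fin N → Fin 2, (fun k => z (ω k)) = y ↔ z = fun k => y (ω⁻¹ k) := by
    intro z
    constructor
    · rintro rfl; funext k; simp
    · rintro rfl; funext k; simp
  simp [Matrix.mul_apply, permMat, hz]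

lemma permMat_one : permMat N 1 = 1 := by
  ext x y
  by_cases h : x = y <;> simp [permMat, Matrix.one_apply, h]

lemma permMat_mul (ω σ : Equiv.Perm (Fin N)) :
    permMat N ω * permMat N σ = permMat N (ω * σ) := by
  ext x y
  rw [permMat_mul_apply]
  rfl

lemma semiconjBy_permMat_emb1 (ω : Equiv.Perm (Fin N)) (i : Fin N) (T : Matrix (Fin 2) (Fin 2) ℂ) :
    SemiconjBy (permMat N ω) (emb1 i T) (emb1 (ω i) T) := by
  ext x y
  rw [permMat_mul_apply, mul_permMat_apply]
  have key : (∀ k, k ≠ ω i → x k = y (ω⁻¹ k)) ↔ ∀ k, k ≠ i → x (ω k) = y k := by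
    rw [ω.symm.forall_congr_left]
    simp
  simp only [emb1, key]
  simp

lemma semiconjBy_permMat_emb2 (ω : Equiv.Perm (Fin N)) (i j : Fin N)
    (T : Matrix (Fin 2 × Fin 2) (Fin 2 × Fin 2) ℂ) :
    SemiconjBy (permMat N ω) (emb2 i j T) (emb2 (ω i) (ω j) T) := by
  ext x y
  rw [permMat_mul_apply, mul_permMat_apply]
  have key : (∀ k, k ≠ ω i → k ≠ ω j → x k = y (ω⁻¹ k)) ↔
      ∀ k, k ≠ i → k ≠ j → x (ω k) = y k := by
    rw [ω.symm.forall_congr_left]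
    simp
  simp only [emb2, key]
  simp

lemma swapMat_mul_apply (T : Matrix (Fin 2 × Fin 2) (Fin 2 × Fin 2) ℂ) (a b : Fin 2)
    (p : Fin 2 × Fin 2) : (swapMat * T) (a, b) p = T (b, a) p := by
  rw [Matrix.mul_apply, Finset.sum_eq_single (b, a)] <;> aesop (add simp swapMat)

lemma emb2_swapMat_mul (i j : Fin N) (T : Matrix (Fin 2 × Fin 2) (Fin 2 × Fin 2) ℂ) :
    emb2 i j (swapMat * T) = permMat N (Equiv.swap i j) * emb2 i j T := by
  ext x y
  rw [permMat_mul_apply]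
  simp +contextual [emb2, swapMat_mul_apply, Equiv.swap_apply_of_ne_of_ne]

end PermMat

section Sites

open Fin.NatCast

variable {N : ℕ} [NeZero N]

lemma Fin.natCast_ne_natCast {a b : ℕ} (ha : a < N) (hb : b < N) (hab : a ≠ b) :
    (a : Fin N) ≠ (b : Fin N) := fun h =>
  hab (by rw [← Fin.val_cast_of_lt ha, ← Fin.val_cast_of_lt hb, h])

lemma Fin.coe_cycleRange_natCast {m : ℕ} (hm : m < N) (j : Fin N) :
    (Fin.cycleRange (m : Fin N) j : ℕ) =
      if (j : ℕ) < m then (j : ℕ) + 1 else if (j : ℕ) = m then 0 else (j : ℕ) := by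
  have hmv : ((m : Fin N) : ℕ) = m := Fin.val_cast_of_lt hm
  split_ifs with hlt heq
  · exact Fin.coe_cycleRange_of_lt (by rw [Fin.lt_def, hmv]; exact hlt)
  · rw [show j = (m : Fin N) from Fin.ext (hmv.symm ▸ heq), Fin.cycleRange_self, Fin.val_zero]
  · rw [Fin.cycleRange_of_gt (Fin.lt_def.2 (by omega))]

lemma Fin.cycleRange_natCast_succ {c : ℕ} (hc : c + 1 < N) :
    Fin.cycleRange ((c + 1 : ℕ) : Fin N) =
      Fin.cycleRange (c : Fin N) * Equiv.swap (c : Fin N) ((c + 1 : ℕ) : Fin N) := by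
  ext j
  rw [Equiv.Perm.mul_apply, Fin.coe_cycleRange_natCast hc, Fin.coe_cycleRange_natCast (by omega),
    Equiv.swap_apply_def]
  have hcv : ((c : Fin N) : ℕ) = c := Fin.val_cast_of_lt (by omega)
  have hc1v : (((c + 1 : ℕ) : Fin N) : ℕ) = c + 1 := Fin.val_cast_of_lt hc
  split_ifs <;> simp only [Fin.ext_iff, hcv, hc1v] at * <;> omega

/-- The permutation reversing the sites `0, …, m - 1`. -/
def revPrefix : ℕ → Equiv.Perm (Fin N)
  | 0 => 1
  | m + 1 => Fin.cycleRange (m : Fin N) * revPrefix m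

lemma coe_revPrefix {m : ℕ} (hm : m ≤ N) (k : Fin N) :
    (revPrefix m k : ℕ) = if (k : ℕ) < m then m - 1 - (k : ℕ) else (k : ℕ) := by
  induction m with
  | zero => simp [revPrefix]
  | succ m ih =>
    rw [revPrefix, Equiv.Perm.mul_apply, Fin.coe_cycleRange_natCast (by omega), ih (by omega)]
    split_ifs <;> omega

lemma revPrefix_self : revPrefix N = (Fin.revPerm : Equiv.Perm (Fin N)) := by
  ext k
  rw [coe_revPrefix le_rfl, Fin.revPerm_apply, Fin.val_rev, if_pos k.isLt]
  omega

lemma prod_emb2_adjacent_swapMat_mul (t : ℕ → Matrix (Fin 2 × Fin 2) (Fin 2 × Fin 2) ℂ) {c : ℕ}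
    (hc : c < N) :
    ((List.range c).map fun b : ℕ =>
        emb2 (b : Fin N) ((b + 1 : ℕ) : Fin N) (swapMat * t b)).prod =
      permMat N (Fin.cycleRange (c : Fin N)) *
        ((List.range c).map fun b : ℕ => emb2 (b : Fin N) (c : Fin N) (t b)).prod := by
  induction c with
  | zero => simp [permMat_one]
  | succ c ih =>
    set s := Equiv.swap (c : Fin N) ((c + 1 : ℕ) : Fin N)
    have hX : SemiconjBy (permMat N s)
        ((List.range c).map fun b : ℕ => emb2 (b : Fin N) ((c + 1 : ℕ) : Fin N) (t b)).prod
        ((List.range c).map fun b : ℕ => emb2 (b : Fin N) (c : Fin N) (t b)).prod := by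
      refine SemiconjBy.list_prod_map fun b hb => ?_
      have hb : b < c := List.mem_range.1 hb
      have hsb : s (b : Fin N) = b := Equiv.swap_apply_of_ne_of_ne
        (Fin.natCast_ne_natCast (by omega) (by omega) (by omega))
        (Fin.natCast_ne_natCast (by omega) hc (by omega))
      have := semiconjBy_permMat_emb2 s (b : Fin N) ((c + 1 : ℕ) : Fin N) (t b)
      rwa [hsb, Equiv.swap_apply_right] at this
    rw [List.prod_range_succ, List.prod_range_succ, ih (by omega), emb2_swapMat_mul,
      Fin.cycleRange_natCast_succ hc, ← permMat_mul]
    simp only [mul_assoc]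
    rw [← mul_assoc _ (permMat N s), ← hX.eq, mul_assoc]

variable (k : ℕ → Matrix (Fin 2) (Fin 2) ℂ)
  (t : ℕ → ℕ → Matrix (Fin 2 × Fin 2) (Fin 2 × Fin 2) ℂ)

def boundaryFactor (c : ℕ) : Matrix (Fin N → Fin 2) (Fin N → Fin 2) ℂ :=
  emb1 (c : Fin N) (k c) *
    ((List.range c).map fun b : ℕ => emb2 ((c - 1 - b : ℕ) : Fin N) (c : Fin N) (t c b)).prod

def braidedFactor (c : ℕ) : Matrix (Fin N → Fin 2) (Fin N → Fin 2) ℂ :=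
  emb1 (0 : Fin N) (k c) *
    ((List.range c).map fun b : ℕ =>
      emb2 (b : Fin N) ((b + 1 : ℕ) : Fin N) (swapMat * t c b)).prod

lemma permMat_revPrefix_succ_mul_boundaryFactor {m : ℕ} (hm : m < N) :
    permMat N (revPrefix (m + 1)) * boundaryFactor k t m =
      braidedFactor k t m * permMat N (revPrefix m) := by
  have hfix : revPrefix m (m : Fin N) = m := Fin.ext <| by
    rw [coe_revPrefix hm.le, Fin.val_cast_of_lt hm, if_neg (lt_irrefl m)]
  have hK : SemiconjBy (permMat N (revPrefix m)) (emb1 (m : Fin N) (k m))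
      (emb1 (m : Fin N) (k m)) := by
    have h := semiconjBy_permMat_emb1 (revPrefix m) (m : Fin N) (k m)
    rwa [hfix] at h
  have hA : SemiconjBy (permMat N (revPrefix m))
      ((List.range m).map fun b : ℕ => emb2 ((m - 1 - b : ℕ) : Fin N) (m : Fin N) (t m b)).prod
      ((List.range m).map fun b : ℕ => emb2 (b : Fin N) (m : Fin N) (t m b)).prod := by
    refine SemiconjBy.list_prod_map fun b hb => ?_
    have hb : b < m := List.mem_range.1 hb
    have hrev : revPrefix m ((m - 1 - b : ℕ) : Fin N) = b := Fin.ext <| by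
      rw [coe_revPrefix hm.le, Fin.val_cast_of_lt (by omega), Fin.val_cast_of_lt (by omega),
        if_pos (by omega)]
      omega
    have h := semiconjBy_permMat_emb2 (revPrefix m) ((m - 1 - b : ℕ) : Fin N) (m : Fin N) (t m b)
    rwa [hrev, hfix] at h
  have hK₀ : SemiconjBy (permMat N (Fin.cycleRange (m : Fin N))) (emb1 (m : Fin N) (k m))
      (emb1 (0 : Fin N) (k m)) := by
    simpa using semiconjBy_permMat_emb1 (Fin.cycleRange (m : Fin N)) (m : Fin N) (k m)
  rw [boundaryFactor, braidedFactor, revPrefix, ← permMat_mul, prod_emb2_adjacent_swapMat_mul _ hm,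
    mul_assoc, (hK.mul_right hA).eq]
  simp only [← mul_assoc, hK₀.eq]

lemma permMat_revPrefix_mul_prod_boundaryFactor {m : ℕ} (hm : m ≤ N) :
    permMat N (revPrefix m) * ((List.range m).reverse.map (boundaryFactor k t)).prod =
      ((List.range m).reverse.map (braidedFactor k t)).prod := by
  induction m with
  | zero => simp [revPrefix, permMat_one]
  | succ m ih =>
    simp only [List.range_succ, List.reverse_append, List.reverse_singleton, List.singleton_append,
      List.map_cons, List.prod_cons]
    rw [← mul_assoc, permMat_revPrefix_succ_mul_boundaryFactor k t hm, mul_assoc, ih (by omega)]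

lemma prod_boundaryFactor_eq_finRange (K' : ℕ → Matrix (Fin 2) (Fin 2) ℂ)
    (R' : ℕ → ℕ → Matrix (Fin 2 × Fin 2) (Fin 2 × Fin 2) ℂ) :
    ((List.range N).reverse.map
        (boundaryFactor (fun c => K' (N - 1 - c)) (fun c => R' (N - 1 - c)))).prod =
      ((List.finRange N).map fun a =>
        emb1 (⟨N - 1 - a.1, by omega⟩ : Fin N) (K' a.1) *
          ((List.finRange (N - 1 - a.1)).map fun b =>
            emb2 (⟨N - a.1 - 2 - b.1, by omega⟩ : Fin N) ⟨N - 1 - a.1, by omega⟩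
              (R' a.1 b.1)).prod).prod := by
  refine congrArg List.prod (List.map_finRange_eq_map_reverse_range fun a => ?_).symm
  have ha := a.isLt
  rw [boundaryFactor, Nat.sub_sub_self (by omega : (a : ℕ) ≤ N - 1)]
  congr 2
  · exact Fin.ext (Fin.val_cast_of_lt (by omega)).symm
  · refine List.map_finRange_eq_map_range fun b => ?_
    have hb := b.isLt
    congr 1
    · ext
      rw [Fin.val_mk, Fin.val_cast_of_lt (by omega)]
      omega
    · exact Fin.ext (Fin.val_cast_of_lt (by omega)).symm

lemma prod_braidedFactor_eq_finRange (K' : ℕ → Matrix (Fin 2) (Fin 2) ℂ)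
    (R' : ℕ → ℕ → Matrix (Fin 2 × Fin 2) (Fin 2 × Fin 2) ℂ) :
    ((List.range N).reverse.map
        (braidedFactor (fun c => K' (N - 1 - c)) (fun c => R' (N - 1 - c)))).prod =
      ((List.finRange N).map fun a =>
        emb1 (⟨0, a.pos⟩ : Fin N) (K' a.1) *
          ((List.finRange (N - 1 - a.1)).map fun b =>
            emb2 (⟨b.1, by omega⟩ : Fin N) ⟨b.1 + 1, by omega⟩
              (swapMat * R' a.1 b.1)).prod).prod := by
  refine congrArg List.prod (List.map_finRange_eq_map_reverse_range fun a => ?_).symm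
  have ha := a.isLt
  rw [braidedFactor, Nat.sub_sub_self (by omega : (a : ℕ) ≤ N - 1)]
  congr 2
  refine List.map_finRange_eq_map_range fun b => ?_
  have hb := b.isLt
  congr 1 <;> ext <;> rw [Fin.val_cast_of_lt (by omega)]

end Sites

/-- **Braided form of the fused boundary operator**:
`K̊^I(u) = ∏_{a=I,…,1} [ K(u q^{(I+1)/2−a})₁ ∘ ∏_{b=a−1,…,1} Ř(u² q^{I+1−a−b})_{a−b} ]`,
both products in decreasing order of the index (here `a = I − a'`, `b = a − 1 − b'`, so that
`a − b = b' + 1`, and `Ř(v)_m` acts on the `m`-th and `(m+1)`-th tensor factors, 1-based). -/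
theorem braided_fused_K (I : ℕ) (q : ℝ) (fa fc : ℝ) (u : ℂ) :
    Kring I q (fa : ℂ) (fc : ℂ) u =
      ((List.finRange I).map (fun a' =>
        emb1 (⟨0, by have := a'.isLt; omega⟩ : Fin I)
            (Kmat (fa : ℂ) (fc : ℂ)
              (u * qrpow q (((I : ℝ) + 1) / 2 - ((I : ℝ) - (a'.1 : ℝ))))) *
        ((List.finRange (I - 1 - a'.1)).map (fun b' =>
          emb2 (⟨b'.1, by have := a'.isLt; have := b'.isLt; omega⟩ : Fin I)
            ⟨b'.1 + 1, by have := a'.isLt; have := b'.isLt; omega⟩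
            (RcheckMat (q : ℂ)
              (u ^ 2 * (q : ℂ) ^ (((I : ℤ) + 1) - ((I : ℤ) - (a'.1 : ℤ)) -
                ((I : ℤ) - (a'.1 : ℤ) - 1 - (b'.1 : ℤ))))))).prod)).prod := by
  rcases Nat.eq_zero_or_pos I with rfl | hI
  · simp [Kring, Subsingleton.elim (Fin.revPerm : Equiv.Perm (Fin 0)) 1, permMat_one]
  have : NeZero I := .of_pos hI
  let K' : ℕ → Matrix (Fin 2) (Fin 2) ℂ := fun a =>
    Kmat fa fc (u * qrpow q (((I : ℝ) + 1) / 2 - ((I : ℝ) - (a : ℝ))))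
  let R' : ℕ → ℕ → Matrix (Fin 2 × Fin 2) (Fin 2 × Fin 2) ℂ := fun a b =>
    Rmat q (u ^ 2 * (q : ℂ) ^ (((I : ℤ) + 1) - ((I : ℤ) - (a : ℤ)) -
      ((I : ℤ) - (a : ℤ) - 1 - (b : ℤ))))
  calc Kring I q fa fc u = permMat I (revPrefix I) * ((List.range I).reverse.map
        (boundaryFactor (fun c => K' (I - 1 - c)) (fun c => R' (I - 1 - c)))).prod := by
        rw [revPrefix_self, prod_boundaryFactor_eq_finRange]; rfl
    _ = _ := by
        rw [permMat_revPrefix_mul_prod_boundaryFactor _ _ le_rfl, prod_braidedFactor_eq_finRange]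
        rfl
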